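/- Let μ be a finite Borel measure on the unit sphere S^{n-1} with finite support {u_1, ..., u_m} such that the affine hull of {u_1, ..., u_m} is all of R^n. Then μ is uniquely determined among all finite Borel measures on S^{n-1} by its moments up to order m − n + 2. -/

import Mathlib

open MeasureTheory Metric Real Filter
open scoped InnerProductSpace ENNReal NNReal Topology

noncomputable section

abbrev En (n : ℕ) := EuclideanSpace ℝ (Fin n)

abbrev Sph (n : ℕ) : Set (En n) := Metric.sphere 0 1

/-- The moment of a Borel measure on the sphere corresponding to the
multi-index `i : Fin n → ℕ`. -/
def sphMoment {n : ℕ} (μ : Measure (Sph n)) (i : Fin n → ℕ) : ℝ :=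
  ∫ u, ∏ j, ((u : En n) j) ^ (i j) ∂μ

/-!
Both measures are compared by integrating polynomials that are nonnegative on the sphere. Pick
an affine basis `b` of `ℝⁿ` among the atoms `u_j`. For a finite set `E` of the sphere, the
polynomial `∑ₖ (b.coord k)² · ∏_{y ∈ E, b.coord k y ≠ 0} (1 - ⟪y, ·⟫)` is nonnegative on the
sphere and vanishes there exactly on `E`: on unit vectors `1 - ⟪y, x⟫ = ‖y - x‖² / 2`, and the
barycentric coordinates have no common zero. The `n` basis points other than `b k` lie on
`b.coord k = 0`, so for `E` inside the support its degree is at most `m - n + 2`. Taking for `E`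
the support shows that `ν` is carried by it; taking the support minus one atom `x` isolates the
mass of `x`.
-/

open MvPolynomial Finset

section AffineBasis

variable {ι k V P : Type*} [Fintype ι] [Ring k] [Nontrivial k] [AddCommGroup V] [Module k V]
  [AddTorsor V P] (b : AffineBasis ι k P)

theorem AffineBasis.exists_coord_ne_zero (q : P) : ∃ i, b.coord i q ≠ 0 := by
  by_contra! h
  simpa [h] using b.sum_coord_apply_eq_one q

theorem AffineBasis.card_filter_coord_ne_zero_add_le [DecidableEq k] {X : Type*} {g : X → P}
    {F : Finset X} (hb : Set.range b ⊆ g '' F) (i : ι) :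
    #{y ∈ F | b.coord i (g y) ≠ 0} + (Fintype.card ι - 1) ≤ #F := by
  classical
  have hzero : Fintype.card ι - 1 ≤ #{y ∈ F | ¬b.coord i (g y) ≠ 0} :=
    calc Fintype.card ι - 1 = #((univ.erase i).image b) := by
          rw [card_image_of_injective _ b.ind.injective, card_erase_of_mem (mem_univ i),
            card_univ]
      _ ≤ #({y ∈ F | ¬b.coord i (g y) ≠ 0}.image g) := by
          refine card_le_card fun p hp => ?_
          obtain ⟨j, hj, rfl⟩ := mem_image.1 hp
          obtain ⟨y, hy, hyj⟩ := hb (Set.mem_range_self j)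
          refine mem_image.2 ⟨y, mem_filter.2 ⟨hy, ?_⟩, hyj⟩
          rw [hyj, not_not, b.coord_apply_ne (ne_of_mem_erase hj).symm]
      _ ≤ _ := card_image_le
  have := card_filter_add_card_filter_not (s := F) fun y => b.coord i (g y) ≠ 0
  omega

end AffineBasis

section MeasureCarriedByFinset

variable {X E : Type*} [MeasurableSpace X] [MeasurableSingletonClass X] {F : Finset X}

theorem MeasureTheory.integral_eq_sum_of_measure_compl_eq_zero [NormedAddCommGroup E]
    [NormedSpace ℝ E] [CompleteSpace E] {ρ : Measure X} (hρ : ρ (↑F)ᶜ = 0) {f : X → E}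
    (hf : Integrable f ρ) : ∫ x, f x ∂ρ = ∑ x ∈ F, ρ.real {x} • f x := by
  rw [← setIntegral_finset F hf.integrableOn,
    Measure.restrict_eq_self_of_ae_mem (s := (F : Set X)) hρ]

theorem MeasureTheory.Measure.ext_of_measure_compl_eq_zero {μ ν : Measure X}
    (hμ : μ (↑F)ᶜ = 0) (hν : ν (↑F)ᶜ = 0) (h : ∀ x ∈ F, ν {x} = μ {x}) : ν = μ := by
  classical
  have hsum : ∀ ρ : Measure X, ρ (↑F)ᶜ = 0 → ∀ s, ρ s = ∑ x ∈ F with x ∈ s, ρ {x} := by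
    intro ρ hρ s
    rw [sum_measure_singleton, coe_filter, ← measure_inter_conull hρ]
    congr 1
    ext x
    simp [and_comm]
  ext s -
  rw [hsum ν hν, hsum μ hμ]
  exact Finset.sum_congr rfl fun x hx => h x (mem_filter.1 hx).1

end MeasureCarriedByFinset

namespace SphereMoments

variable {n : ℕ}

def affinePoly (f : En n →ᵃ[ℝ] ℝ) : MvPolynomial (Fin n) ℝ :=
  C (f 0) + ∑ j, C (f.linear (EuclideanSpace.single j 1)) * X j

@[simp]
theorem eval_affinePoly (f : En n →ᵃ[ℝ] ℝ) (x : En n) : eval x (affinePoly f) = f x := by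
  have hx : x = ∑ j, x j • EuclideanSpace.single j (1 : ℝ) := by
    simpa using ((EuclideanSpace.basisFun (Fin n) ℝ).toBasis.sum_repr x).symm
  conv_rhs => rw [← vsub_vadd x 0, AffineMap.map_vadd, vsub_eq_sub, sub_zero, hx]
  simp [affinePoly, mul_comm, add_comm]

theorem totalDegree_affinePoly_le (f : En n →ᵃ[ℝ] ℝ) : (affinePoly f).totalDegree ≤ 1 := by
  refine (totalDegree_add _ _).trans (max_le (by simp) ?_)
  refine (totalDegree_finsetSum _ _).trans (Finset.sup_le fun j _ => ?_)
  exact (totalDegree_mul _ _).trans (by simp [totalDegree_X])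

def oneSubInnerPoly (v : En n) : MvPolynomial (Fin n) ℝ :=
  affinePoly (AffineMap.const ℝ (En n) 1 - (innerSL ℝ v : En n →L[ℝ] ℝ).toAffineMap)

@[simp]
theorem eval_oneSubInnerPoly (v x : En n) : eval x (oneSubInnerPoly v) = 1 - ⟪v, x⟫_ℝ := by
  simp [oneSubInnerPoly]

theorem continuous_eval_coe (q : MvPolynomial (Fin n) ℝ) :
    Continuous fun w : Sph n => eval (w : En n) q :=
  (continuous_eval q).comp ((PiLp.continuous_ofLp 2 _).comp continuous_subtype_val)

theorem integrable_eval_coe (q : MvPolynomial (Fin n) ℝ) (ρ : Measure (Sph n))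
    [IsFiniteMeasure ρ] : Integrable (fun w : Sph n => eval (w : En n) q) ρ :=
  (continuous_eval_coe q).integrable_of_hasCompactSupport (.of_compactSpace _)

theorem integral_eval_eq_sum_coeff_mul_sphMoment (q : MvPolynomial (Fin n) ℝ)
    (ρ : Measure (Sph n)) [IsFiniteMeasure ρ] :
    ∫ w, eval (w : En n) q ∂ρ = ∑ d ∈ q.support, coeff d q * sphMoment ρ d := by
  simp_rw [eval_eq']
  rw [integral_finsetSum]
  · simp_rw [integral_const_mul, sphMoment]
  · intro d _
    simpa [eval_monomial, Finsupp.prod_fintype] using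
      integrable_eval_coe (monomial d (coeff d q)) ρ

theorem integral_eval_eq_of_sphMoment_eq {d : ℕ} {μ ν : Measure (Sph n)} [IsFiniteMeasure μ]
    [IsFiniteMeasure ν] (h : ∀ i : Fin n → ℕ, ∑ j, i j ≤ d → sphMoment ν i = sphMoment μ i)
    {q : MvPolynomial (Fin n) ℝ} (hq : q.totalDegree ≤ d) :
    ∫ w, eval (w : En n) q ∂ν = ∫ w, eval (w : En n) q ∂μ := by
  simp_rw [integral_eval_eq_sum_coeff_mul_sphMoment]
  refine sum_congr rfl fun i hi => ?_
  have hi_deg : ∑ j, i j ≤ d :=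
    (Finsupp.sum_fintype _ _ fun _ => rfl).symm.trans_le ((le_totalDegree hi).trans hq)
  rw [h i hi_deg]

theorem prod_one_sub_inner_nonneg (S : Finset (Sph n)) (w : Sph n) :
    0 ≤ ∏ y ∈ S, (1 - ⟪(y : En n), w⟫_ℝ) :=
  prod_nonneg fun y _ =>
    sub_nonneg.2 (real_inner_le_one_of_norm_eq_one (norm_eq_of_mem_sphere y)
      (norm_eq_of_mem_sphere w))

theorem prod_one_sub_inner_pos {S : Finset (Sph n)} {w : Sph n} (hw : w ∉ S) :
    0 < ∏ y ∈ S, (1 - ⟪(y : En n), w⟫_ℝ) :=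
  prod_pos fun y hy => sub_pos.2 <|
    (inner_lt_one_iff_real_of_norm_eq_one (norm_eq_of_mem_sphere y)
      (norm_eq_of_mem_sphere w)).2 fun h => hw (Subtype.coe_injective h ▸ hy)

variable {ι : Type*} [Fintype ι]

def vanishingPoly (b : AffineBasis ι ℝ (En n)) (E : Finset (Sph n)) : MvPolynomial (Fin n) ℝ :=
  ∑ k, affinePoly (b.coord k) ^ 2 *
    ∏ y ∈ E with b.coord k (y : Sph n) ≠ 0, oneSubInnerPoly (y : En n)

variable (b : AffineBasis ι ℝ (En n)) (E : Finset (Sph n))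

theorem eval_vanishingPoly (w : Sph n) :
    eval (w : En n) (vanishingPoly b E) =
      ∑ k, b.coord k (w : En n) ^ 2 *
        ∏ y ∈ E with b.coord k (y : Sph n) ≠ 0, (1 - ⟪(y : En n), w⟫_ℝ) := by
  simp [vanishingPoly]

theorem eval_vanishingPoly_nonneg (w : Sph n) : 0 ≤ eval (w : En n) (vanishingPoly b E) := by
  rw [eval_vanishingPoly]
  exact sum_nonneg fun k _ => mul_nonneg (sq_nonneg _) (prod_one_sub_inner_nonneg _ w)

theorem eval_vanishingPoly_eq_zero_iff (w : Sph n) :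
    eval (w : En n) (vanishingPoly b E) = 0 ↔ w ∈ E := by
  rw [eval_vanishingPoly, sum_eq_zero_iff_of_nonneg fun k _ =>
    mul_nonneg (sq_nonneg _) (prod_one_sub_inner_nonneg _ w)]
  constructor
  · intro h
    by_contra hw
    obtain ⟨k, hk⟩ := b.exists_coord_ne_zero w
    have hsq : 0 < b.coord k (w : En n) ^ 2 := by positivity
    exact (mul_pos hsq (prod_one_sub_inner_pos fun hw' => hw (mem_filter.1 hw').1)).ne'
      (h k (mem_univ k))
  · intro hw k _
    by_cases hk : b.coord k (w : En n) = 0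
    · simp [hk]
    · rw [prod_eq_zero (mem_filter.2 ⟨hw, hk⟩) (by simp), mul_zero]

theorem totalDegree_vanishingPoly_le {d : ℕ}
    (hd : ∀ k, #{y ∈ E | b.coord k (y : Sph n) ≠ 0} + 2 ≤ d) :
    (vanishingPoly b E).totalDegree ≤ d := by
  refine (totalDegree_finsetSum _ _).trans (Finset.sup_le fun k _ => ?_)
  have hsq : (affinePoly (b.coord k) ^ 2).totalDegree ≤ 2 :=
    (totalDegree_pow _ _).trans (by linarith [totalDegree_affinePoly_le (b.coord k)])
  have hprod : (∏ y ∈ E with b.coord k (y : Sph n) ≠ 0, oneSubInnerPoly (y : En n)).totalDegree ≤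
      #{y ∈ E | b.coord k (y : Sph n) ≠ 0} :=
    (totalDegree_finsetProd _ _).trans <|
      (sum_le_sum fun y _ => totalDegree_affinePoly_le _).trans (by simp)
  exact (totalDegree_mul _ _).trans (by linarith [hd k])

theorem measure_compl_eq_zero_of_integral_eval_vanishingPoly_eq_zero {ν : Measure (Sph n)}
    [IsFiniteMeasure ν] (h : ∫ w, eval (w : En n) (vanishingPoly b E) ∂ν = 0) :
    ν (↑E)ᶜ = 0 := by
  have hae := (integral_eq_zero_iff_of_nonneg (eval_vanishingPoly_nonneg b E)
    (integrable_eval_coe _ ν)).1 h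
  rw [EventuallyEq, ae_iff] at hae
  simp only [Pi.zero_apply, eval_vanishingPoly_eq_zero_iff] at hae
  exact hae

theorem integral_eval_vanishingPoly {F : Finset (Sph n)} {ρ : Measure (Sph n)} [IsFiniteMeasure ρ]
    (hρ : ρ (↑F)ᶜ = 0) (hE : E ⊆ F) :
    ∫ w, eval (w : En n) (vanishingPoly b E) ∂ρ =
      ∑ x ∈ F \ E, ρ.real {x} * eval (x : En n) (vanishingPoly b E) := by
  rw [integral_eq_sum_of_measure_compl_eq_zero hρ (integrable_eval_coe _ ρ), ← sum_sdiff hE,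
    sum_eq_zero (s := E) fun x hx => by rw [(eval_vanishingPoly_eq_zero_iff b E x).2 hx, smul_zero],
    add_zero]
  simp only [smul_eq_mul]

theorem eq_of_integral_eval_eq {F : Finset (Sph n)} {d : ℕ}
    (hd : ∀ k, #{y ∈ F | b.coord k (y : Sph n) ≠ 0} + 2 ≤ d) {μ ν : Measure (Sph n)}
    [IsFiniteMeasure μ] [IsFiniteMeasure ν] (hμ : μ (↑F)ᶜ = 0)
    (h : ∀ q : MvPolynomial (Fin n) ℝ, q.totalDegree ≤ d →
      ∫ w, eval (w : En n) q ∂ν = ∫ w, eval (w : En n) q ∂μ) :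
    ν = μ := by
  have hdeg : ∀ E ⊆ F, (vanishingPoly b E).totalDegree ≤ d := fun E hE =>
    totalDegree_vanishingPoly_le b E fun k =>
      (Nat.add_le_add_right (card_le_card (filter_subset_filter _ hE)) 2).trans (hd k)
  have hν : ν (↑F)ᶜ = 0 := by
    refine measure_compl_eq_zero_of_integral_eval_vanishingPoly_eq_zero b F ?_
    rw [h _ (hdeg F subset_rfl), integral_eval_vanishingPoly b F hμ subset_rfl, sdiff_self,
      bot_eq_empty, sum_empty]
  refine Measure.ext_of_measure_compl_eq_zero hμ hν fun x hx => ?_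
  have hpx : eval (x : En n) (vanishingPoly b (F.erase x)) ≠ 0 := by
    rw [Ne, eval_vanishingPoly_eq_zero_iff]
    exact notMem_erase x F
  have hx' := h _ (hdeg _ (erase_subset x F))
  rw [integral_eval_vanishingPoly b _ hν (erase_subset x F),
    integral_eval_vanishingPoly b _ hμ (erase_subset x F), sdiff_erase_self hx, sum_singleton,
    sum_singleton] at hx'
  exact (ENNReal.toReal_eq_toReal_iff' (measure_ne_top ν _) (measure_ne_top μ _)).1
    (mul_right_cancel₀ hpx hx')

end SphereMoments

open SphereMoments

theorem stmt1 {n : ℕ} (m : ℕ) (u : Fin m → Sph n)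
    (α : Fin m → ℝ≥0) (μ : Measure (Sph n))
    (hμ : μ = ∑ j, (α j : ℝ≥0∞) • Measure.dirac (u j))
    (haff : affineSpan ℝ (Set.range fun j => ((u j : En n))) = ⊤)
    (ν : Measure (Sph n)) [IsFiniteMeasure ν]
    (hmom : ∀ i : Fin n → ℕ, (∑ j, i j) ≤ m - n + 2 → sphMoment ν i = sphMoment μ i) :
    ν = μ := by
  classical
  set F : Finset (Sph n) := univ.image u
  have : IsFiniteMeasure μ := ⟨by simp [hμ, ENNReal.sum_lt_top]⟩
  have hμF : μ (↑F)ᶜ = 0 := by simp [hμ, F]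
  have hspan : affineSpan ℝ (((↑) : Sph n → En n) '' F) = ⊤ := by
    rw [coe_image, coe_univ, Set.image_univ, ← Set.range_comp]
    exact haff
  obtain ⟨s, hsF, b, hb⟩ := AffineBasis.exists_affine_subbasis hspan
  have : Fintype s := ((F.finite_toSet.image _).subset hsF).fintype
  have hcard : Fintype.card s = n + 1 := by
    rw [b.card_eq_finrank_add_one, finrank_euclideanSpace_fin]
  refine eq_of_integral_eval_eq b (fun k => ?_) hμF fun q hq =>
    integral_eval_eq_of_sphMoment_eq hmom hq
  have hk := b.card_filter_coord_ne_zero_add_le (g := (↑)) (F := F)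
    (by rw [hb, Subtype.range_coe]; exact hsF) k
  have hF : #F ≤ m := card_image_le.trans (by simp)
  omega

end
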